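/- arXiv:1209.3789 — 2 statements merged into one kernel-verified Lean document; each statement's English description precedes it below -/
import Mathlib

section
/- For T > 0 and θ ∈ ℝ, the vector ∂φ/∂t(T,θ) is a positive scalar multiple of φ(T,θ) if and only if coth T = 2 tanh(2T), where φ(t,θ) = (2 sinh t cos θ, 2 sinh t sin θ, cosh 2t cos 2θ, cosh 2t sin 2θ). -/
/-- The parametrization of the critical Möbius band. -/
noncomputable def phiCMB (t θ : ℝ) : Fin 4 → ℝ :=
  ![2 * Real.sinh t * Real.cos θ, 2 * Real.sinh t * Real.sin θ,
    Real.cosh (2 * t) * Real.cos (2 * θ), Real.cosh (2 * t) * Real.sin (2 * θ)]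

/-!
Pairing the components of `∂φ/∂t = c φ` along the unit vectors `(cos θ, sin θ)` and
`(cos 2θ, sin 2θ)` leaves `cosh T = c sinh T` and `2 sinh 2T = c cosh 2T`; for `T > 0` the first
forces `c = coth T > 0`, and the second then reads `coth T = 2 tanh 2T`.
-/

open Real

lemma mul_cos_eq_and_mul_sin_eq_iff (a b c α : ℝ) :
    (a * cos α = c * (b * cos α) ∧ a * sin α = c * (b * sin α)) ↔ a = c * b := by
  refine ⟨fun ⟨hcos, hsin⟩ => ?_, fun h => by constructor <;> rw [h] <;> ring⟩
  linear_combination cos α * hcos + sin α * hsin + (c * b - a) * sin_sq_add_cos_sq α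

lemma deriv_two_mul_sinh_mul (T a : ℝ) :
    deriv (fun s => 2 * sinh s * a) T = 2 * cosh T * a :=
  (((hasDerivAt_sinh T).const_mul 2).mul_const a).deriv

lemma deriv_cosh_two_mul_mul (T a : ℝ) :
    deriv (fun s => cosh (2 * s) * a) T = 2 * sinh (2 * T) * a := by
  rw [(((hasDerivAt_id' T).const_mul 2).cosh.mul_const a).deriv]
  ring

lemma deriv_phiCMB_eq_mul_iff (T θ c : ℝ) :
    (∀ i : Fin 4, deriv (fun s => phiCMB s θ i) T = c * phiCMB T θ i) ↔
      2 * cosh T = c * (2 * sinh T) ∧ 2 * sinh (2 * T) = c * cosh (2 * T) := by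
  simp only [Fin.forall_fin_succ, IsEmpty.forall_iff, and_true, phiCMB,
    Matrix.cons_val_zero, Matrix.cons_val_succ, deriv_two_mul_sinh_mul, deriv_cosh_two_mul_mul]
  rw [← and_assoc, mul_cos_eq_and_mul_sin_eq_iff, mul_cos_eq_and_mul_sin_eq_iff]

/-- For `T > 0`, `∂φ/∂t(T,θ)` is a positive multiple of `φ(T,θ)` iff `coth T = 2 tanh 2T`. -/
theorem stmt_6 (T θ : ℝ) (hT : 0 < T) :
    (∃ c : ℝ, 0 < c ∧ ∀ i : Fin 4, deriv (fun s => phiCMB s θ i) T = c * phiCMB T θ i) ↔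
      Real.cosh T / Real.sinh T = 2 * Real.tanh (2 * T) := by
  have hsinh : 0 < sinh T := sinh_pos_iff.mpr hT
  simp only [deriv_phiCMB_eq_mul_iff, tanh_eq_sinh_div_cosh]
  constructor
  · rintro ⟨c, -, hc₁, hc₂⟩
    field_simp
    linear_combination cosh (2 * T) / 2 * hc₁ - sinh T * hc₂
  · intro h
    refine ⟨cosh T / sinh T, by positivity, by field_simp, ?_⟩
    rw [h]
    field_simp
end

section
/- Let w be a harmonic function on the annulus {x ∈ ℝ² : ε ≤ |x|}, smooth up to the boundary. Then the quantity I(ρ) = ρ ∫_{|x|=ρ} (|∂_T w|² − |∂_r w|²) ds is independent of ρ for ρ ≥ ε, where ∂_r is the radial derivative, ∂_T is the derivative in the unit tangential direction to the circle |x| = ρ, and ds is arclength. Moreover, if additionally |w(x)| ≤ C|x|^{−1} for large |x|, then I(ρ) = 0 for all ρ ≥ ε. -/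
open intervalIntegral Real MeasureTheory Metric


noncomputable def pd1 (f : ℝ × ℝ → ℝ) : ℝ × ℝ → ℝ := fun p => fderiv ℝ f p (1, 0)
noncomputable def pd2 (f : ℝ × ℝ → ℝ) : ℝ × ℝ → ℝ := fun p => fderiv ℝ f p (0, 1)

lemma contDiff_pd1 {f : ℝ × ℝ → ℝ} (hf : ContDiff ℝ (⊤ : ℕ∞) f) : ContDiff ℝ (⊤ : ℕ∞) (pd1 f) := by
  have : pd1 f = fun p => (ContinuousLinearMap.apply ℝ ℝ ((1:ℝ), (0:ℝ))) (fderiv ℝ f p) := rfl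
  rw [this]
  exact (ContinuousLinearMap.apply ℝ ℝ ((1:ℝ),(0:ℝ))).contDiff.comp (hf.fderiv_right (by simp))

lemma contDiff_pd2 {f : ℝ × ℝ → ℝ} (hf : ContDiff ℝ (⊤ : ℕ∞) f) : ContDiff ℝ (⊤ : ℕ∞) (pd2 f) := by
  have : pd2 f = fun p => (ContinuousLinearMap.apply ℝ ℝ ((0:ℝ), (1:ℝ))) (fderiv ℝ f p) := rfl
  rw [this]
  exact (ContinuousLinearMap.apply ℝ ℝ ((0:ℝ),(1:ℝ))).contDiff.comp (hf.fderiv_right (by simp))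

lemma hasDerivAt_pd1 {f : ℝ × ℝ → ℝ} (hf : ContDiff ℝ (⊤ : ℕ∞) f) (r θ : ℝ) :
    HasDerivAt (fun s => f (s, θ)) (pd1 f (r, θ)) r := by
  have h1 : HasDerivAt (fun s : ℝ => (s, θ)) ((1:ℝ), (0:ℝ)) r := by
    simpa using ((hasDerivAt_id r).prodMk (hasDerivAt_const r θ))
  exact ((hf.differentiable (by simp) (r, θ)).hasFDerivAt).comp_hasDerivAt r h1

lemma hasDerivAt_pd2 {f : ℝ × ℝ → ℝ} (hf : ContDiff ℝ (⊤ : ℕ∞) f) (r θ : ℝ) :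
    HasDerivAt (fun t => f (r, t)) (pd2 f (r, θ)) θ := by
  have h1 : HasDerivAt (fun t : ℝ => (r, t)) ((0:ℝ), (1:ℝ)) θ := by
    simpa using ((hasDerivAt_const θ r).prodMk (hasDerivAt_id θ))
  exact ((hf.differentiable (by simp) (r, θ)).hasFDerivAt).comp_hasDerivAt θ h1

lemma pd_apply_eq {f : ℝ × ℝ → ℝ} (hf : ContDiff ℝ (⊤ : ℕ∞) f) (v p u : ℝ × ℝ) :
    fderiv ℝ (fun q => fderiv ℝ f q v) p u = fderiv ℝ (fderiv ℝ f) p u v := by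
  have h : HasFDerivAt (fun q => fderiv ℝ f q v)
      ((ContinuousLinearMap.apply ℝ ℝ v).comp (fderiv ℝ (fderiv ℝ f) p)) p :=
    (ContinuousLinearMap.apply ℝ ℝ v).hasFDerivAt.comp p
      (((hf.fderiv_right (m := 1) (WithTop.coe_le_coe.2 le_top)).differentiable one_ne_zero p).hasFDerivAt)
  rw [h.fderiv]
  simp [ContinuousLinearMap.apply]

lemma pd_comm {f : ℝ × ℝ → ℝ} (hf : ContDiff ℝ (⊤ : ℕ∞) f) (p : ℝ × ℝ) :
    pd2 (pd1 f) p = pd1 (pd2 f) p := by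
  have hsym : IsSymmSndFDerivAt ℝ f p := by
    apply ContDiffAt.isSymmSndFDerivAt (hf.contDiffAt)
    rw [minSmoothness_of_isRCLikeNormedField]; exact WithTop.coe_le_coe.2 le_top
  show fderiv ℝ (fun q => fderiv ℝ f q (1,0)) p (0,1)
      = fderiv ℝ (fun q => fderiv ℝ f q (0,1)) p (1,0)
  rw [pd_apply_eq hf ((1:ℝ),(0:ℝ)) p ((0:ℝ),(1:ℝ)),
    pd_apply_eq hf ((0:ℝ),(1:ℝ)) p ((1:ℝ),(0:ℝ))]
  exact hsym ((0:ℝ),(1:ℝ)) ((1:ℝ),(0:ℝ))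


lemma hasDerivAt_int {F F' : ℝ → ℝ → ℝ} (hF : Continuous (fun p : ℝ × ℝ => F p.1 p.2))
    (hF' : Continuous (fun p : ℝ × ℝ => F' p.1 p.2))
    (hd : ∀ x t : ℝ, HasDerivAt (fun y => F y t) (F' x t) x) (x₀ : ℝ) :
    HasDerivAt (fun x => ∫ t in (0:ℝ)..(2*π), F x t) (∫ t in (0:ℝ)..(2*π), F' x₀ t) x₀ := by
  -- bound on compact set
  obtain ⟨M, hM⟩ : ∃ M, ∀ p ∈ (Metric.closedBall x₀ 1 ×ˢ Set.uIcc (0:ℝ) (2*π)),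
      |(fun p : ℝ × ℝ => F' p.1 p.2) p| ≤ M := by
    have hcp : IsCompact (Metric.closedBall x₀ 1 ×ˢ Set.uIcc (0:ℝ) (2*π)) :=
      (isCompact_closedBall _ _).prod isCompact_uIcc
    obtain ⟨M, hM⟩ := hcp.exists_bound_of_continuousOn hF'.continuousOn
    exact ⟨M, fun p hp => by simpa using hM p hp⟩
  have main := intervalIntegral.hasDerivAt_integral_of_dominated_loc_of_deriv_le
    (F := F) (F' := F') (x₀ := x₀) (a := 0) (b := 2*π) (bound := fun _ => M)
    (μ := MeasureTheory.volume) (ball_mem_nhds x₀ one_pos)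
    (Filter.Eventually.of_forall fun x =>
      ((hF.comp (continuous_const.prodMk continuous_id)).aestronglyMeasurable))
    ((hF.comp (continuous_const.prodMk continuous_id)).intervalIntegrable _ _)
    ((hF'.comp (continuous_const.prodMk continuous_id)).aestronglyMeasurable)
    (Filter.Eventually.of_forall fun t ht x hx => by
      have : ((x, t) : ℝ × ℝ) ∈ Metric.closedBall x₀ 1 ×ˢ Set.uIcc (0:ℝ) (2*π) :=
        ⟨ball_subset_closedBall hx, Set.uIoc_subset_uIcc ht⟩
      simpa [Real.norm_eq_abs] using hM _ this)
    (intervalIntegrable_const)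
    (Filter.Eventually.of_forall fun t ht x hx => hd x t)
  exact main.2

lemma integral_deriv_periodic (g g' : ℝ → ℝ) (h : ∀ t, HasDerivAt g (g' t) t)
    (hper : g (2*π) = g 0) (hc : Continuous g') :
    (∫ t in (0:ℝ)..(2*π), g' t) = 0 := by
  rw [intervalIntegral.integral_eq_sub_of_hasDerivAt (fun t _ => h t)
    (hc.intervalIntegrable _ _), hper, sub_self]

section Quantities
variable (f : ℝ × ℝ → ℝ)

noncomputable def iA (ρ : ℝ) : ℝ := ∫ θ in (0:ℝ)..(2*π), (pd2 f (ρ,θ))^2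
noncomputable def iB (ρ : ℝ) : ℝ := ∫ θ in (0:ℝ)..(2*π), (pd1 f (ρ,θ))^2
noncomputable def iD (ρ : ℝ) : ℝ := ∫ θ in (0:ℝ)..(2*π), f (ρ,θ) * pd1 f (ρ,θ)
noncomputable def iH (ρ : ℝ) : ℝ := ∫ θ in (0:ℝ)..(2*π), (f (ρ,θ))^2
noncomputable def iQ (ρ : ℝ) : ℝ := ∫ θ in (0:ℝ)..(2*π), pd1 f (ρ,θ) * pd2 (pd2 f) (ρ,θ)

end Quantities

lemma contLeft {g : ℝ × ℝ → ℝ} (hg : Continuous g) (ρ : ℝ) :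
    Continuous (fun θ => g (ρ, θ)) := hg.comp (continuous_const.prodMk continuous_id)

lemma intLeft {g : ℝ × ℝ → ℝ} (hg : Continuous g) (ρ a b : ℝ) :
    IntervalIntegrable (fun θ => g (ρ, θ)) volume a b :=
  (contLeft hg ρ).intervalIntegrable a b

lemma iA_nonneg (f : ℝ × ℝ → ℝ) (ρ : ℝ) : 0 ≤ iA f ρ :=
  intervalIntegral.integral_nonneg (by positivity) (fun θ _ => sq_nonneg _)

lemma iB_nonneg (f : ℝ × ℝ → ℝ) (ρ : ℝ) : 0 ≤ iB f ρ :=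
  intervalIntegral.integral_nonneg (by positivity) (fun θ _ => sq_nonneg _)

variable {f : ℝ × ℝ → ℝ}

lemma hasDerivAt_iA (hf : ContDiff ℝ (⊤ : ℕ∞) f) (ρ : ℝ) :
    HasDerivAt (iA f) (∫ θ in (0:ℝ)..(2*π), 2 * pd2 f (ρ,θ) * pd1 (pd2 f) (ρ,θ)) ρ := by
  apply hasDerivAt_int (F := fun x t => (pd2 f (x,t))^2)
    (F' := fun x t => 2 * pd2 f (x,t) * pd1 (pd2 f) (x,t))
  · exact ((contDiff_pd2 hf).continuous).pow 2
  · exact (continuous_const.mul (contDiff_pd2 hf).continuous).mul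
      (contDiff_pd1 (contDiff_pd2 hf)).continuous
  · intro x t
    simpa using (hasDerivAt_pd1 (contDiff_pd2 hf) x t).fun_pow 2

lemma hasDerivAt_iB (hf : ContDiff ℝ (⊤ : ℕ∞) f) (ρ : ℝ) :
    HasDerivAt (iB f) (∫ θ in (0:ℝ)..(2*π), 2 * pd1 f (ρ,θ) * pd1 (pd1 f) (ρ,θ)) ρ := by
  apply hasDerivAt_int (F := fun x t => (pd1 f (x,t))^2)
    (F' := fun x t => 2 * pd1 f (x,t) * pd1 (pd1 f) (x,t))
  · exact ((contDiff_pd1 hf).continuous).pow 2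
  · exact (continuous_const.mul (contDiff_pd1 hf).continuous).mul
      (contDiff_pd1 (contDiff_pd1 hf)).continuous
  · intro x t
    simpa using (hasDerivAt_pd1 (contDiff_pd1 hf) x t).fun_pow 2

lemma hasDerivAt_iD (hf : ContDiff ℝ (⊤ : ℕ∞) f) (ρ : ℝ) :
    HasDerivAt (iD f)
      (∫ θ in (0:ℝ)..(2*π), (pd1 f (ρ,θ) * pd1 f (ρ,θ) + f (ρ,θ) * pd1 (pd1 f) (ρ,θ))) ρ := by
  apply hasDerivAt_int (F := fun x t => f (x,t) * pd1 f (x,t))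
    (F' := fun x t => pd1 f (x,t) * pd1 f (x,t) + f (x,t) * pd1 (pd1 f) (x,t))
  · exact hf.continuous.mul (contDiff_pd1 hf).continuous
  · exact ((contDiff_pd1 hf).continuous.mul (contDiff_pd1 hf).continuous).add
      (hf.continuous.mul (contDiff_pd1 (contDiff_pd1 hf)).continuous)
  · intro x t
    exact (hasDerivAt_pd1 hf x t).mul (hasDerivAt_pd1 (contDiff_pd1 hf) x t)

lemma hasDerivAt_iH (hf : ContDiff ℝ (⊤ : ℕ∞) f) (ρ : ℝ) :
    HasDerivAt (iH f) (2 * iD f ρ) ρ := by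
  have h := hasDerivAt_int (F := fun x t => (f (x,t))^2)
    (F' := fun x t => 2 * (f (x,t) * pd1 f (x,t)))
    (hf.continuous.pow 2)
    (continuous_const.mul (hf.continuous.mul (contDiff_pd1 hf).continuous))
    (fun x t => by simpa [mul_assoc] using (hasDerivAt_pd1 hf x t).fun_pow 2) ρ
  have h' : HasDerivAt (fun x => ∫ t in (0:ℝ)..(2*π), (f (x,t))^2) (2 * iD f ρ) ρ := by
    simpa [iD, intervalIntegral.integral_const_mul] using h
  exact h'

section Periodic
variable (hf : ContDiff ℝ (⊤ : ℕ∞) f) (hperf : ∀ r θ : ℝ, f (r, θ + 2*π) = f (r, θ))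
include hf hperf

lemma per_pd1 (r θ : ℝ) : pd1 f (r, θ + 2*π) = pd1 f (r, θ) := by
  rw [← (hasDerivAt_pd1 hf r (θ + 2*π)).deriv, ← (hasDerivAt_pd1 hf r θ).deriv]
  congr 1
  exact funext fun s => hperf s θ

lemma per_pd2 (r θ : ℝ) : pd2 f (r, θ + 2*π) = pd2 f (r, θ) := by
  rw [← (hasDerivAt_pd2 hf r (θ + 2*π)).deriv, ← (hasDerivAt_pd2 hf r θ).deriv,
    ← deriv_comp_add_const (fun t => f (r, t)) (2*π) θ]
  congr 1
  exact funext fun t => hperf r t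

-- ∫ (W_θθ W_r + W_θ W_rθ) dθ = 0
lemma ibp1 (ρ : ℝ) :
    (∫ θ in (0:ℝ)..(2*π),
      (pd2 (pd2 f) (ρ,θ) * pd1 f (ρ,θ) + pd2 f (ρ,θ) * pd2 (pd1 f) (ρ,θ))) = 0 := by
  apply integral_deriv_periodic (g := fun t => pd2 f (ρ,t) * pd1 f (ρ,t))
  · intro t
    exact (hasDerivAt_pd2 (contDiff_pd2 hf) ρ t).mul (hasDerivAt_pd2 (contDiff_pd1 hf) ρ t)
  · have := per_pd1 hf hperf ρ 0
    have h2 := per_pd2 hf hperf ρ 0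
    simp only [zero_add] at this h2
    rw [this, h2]
  · exact (contLeft ((contDiff_pd2 (contDiff_pd2 hf)).continuous.mul
      (contDiff_pd1 hf).continuous) ρ).add (contLeft ((contDiff_pd2 hf).continuous.mul
      (contDiff_pd2 (contDiff_pd1 hf)).continuous) ρ)

-- ∫ (W_θ² + W W_θθ) dθ = 0
lemma ibp2 (ρ : ℝ) :
    (∫ θ in (0:ℝ)..(2*π),
      (pd2 f (ρ,θ) * pd2 f (ρ,θ) + f (ρ,θ) * pd2 (pd2 f) (ρ,θ))) = 0 := by
  apply integral_deriv_periodic (g := fun t => f (ρ,t) * pd2 f (ρ,t))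
  · intro t
    exact (hasDerivAt_pd2 hf ρ t).mul (hasDerivAt_pd2 (contDiff_pd2 hf) ρ t)
  · have := hperf ρ 0
    have h2 := per_pd2 hf hperf ρ 0
    simp only [zero_add] at this h2
    rw [this, h2]
  · exact (contLeft ((contDiff_pd2 hf).continuous.mul (contDiff_pd2 hf).continuous) ρ).add
      (contLeft (hf.continuous.mul (contDiff_pd2 (contDiff_pd2 hf)).continuous) ρ)

lemma hasDerivAt_iA' (ρ : ℝ) : HasDerivAt (iA f) (-2 * iQ f ρ) ρ := by
  have h := hasDerivAt_iA hf ρ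
  have e : (∫ θ in (0:ℝ)..(2*π), 2 * pd2 f (ρ,θ) * pd1 (pd2 f) (ρ,θ)) = -2 * iQ f ρ := by
    have hcomm : ∀ θ : ℝ, pd1 (pd2 f) (ρ,θ) = pd2 (pd1 f) (ρ,θ) := fun θ => (pd_comm hf _).symm
    have e1 : (∫ θ in (0:ℝ)..(2*π), 2 * pd2 f (ρ,θ) * pd1 (pd2 f) (ρ,θ))
        = 2 * ∫ θ in (0:ℝ)..(2*π), pd2 f (ρ,θ) * pd2 (pd1 f) (ρ,θ) := by
      rw [← intervalIntegral.integral_const_mul]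
      apply intervalIntegral.integral_congr
      intro θ _
      show 2 * pd2 f (ρ,θ) * pd1 (pd2 f) (ρ,θ) = 2 * (pd2 f (ρ,θ) * pd2 (pd1 f) (ρ,θ))
      rw [hcomm θ]; ring
    have e2 : (∫ θ in (0:ℝ)..(2*π), pd2 f (ρ,θ) * pd2 (pd1 f) (ρ,θ))
        = - iQ f ρ := by
      have hadd := ibp1 hf hperf ρ
      rw [intervalIntegral.integral_add
        (intLeft ((contDiff_pd2 (contDiff_pd2 hf)).continuous.fun_mul
          (contDiff_pd1 hf).continuous) ρ _ _)
        (intLeft ((contDiff_pd2 hf).continuous.fun_mul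
          (contDiff_pd2 (contDiff_pd1 hf)).continuous) ρ _ _)] at hadd
      have : (∫ θ in (0:ℝ)..(2*π), pd2 (pd2 f) (ρ,θ) * pd1 f (ρ,θ)) = iQ f ρ := by
        apply intervalIntegral.integral_congr
        intro θ _
        show pd2 (pd2 f) (ρ,θ) * pd1 f (ρ,θ) = pd1 f (ρ,θ) * pd2 (pd2 f) (ρ,θ)
        rw [mul_comm]
      rw [this] at hadd
      linarith
    rw [e1, e2]; ring
  rwa [e] at h

end Periodic

section Harm
variable (hf : ContDiff ℝ (⊤ : ℕ∞) f) {ρ : ℝ}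
  (harm : ∀ θ : ℝ, pd1 (pd1 f) (ρ,θ) = -(ρ⁻¹ * pd1 f (ρ,θ)) - ρ⁻¹^2 * pd2 (pd2 f) (ρ,θ))
include hf harm

lemma hasDerivAt_iB' : HasDerivAt (iB f) (-2*ρ⁻¹ * iB f ρ - 2*ρ⁻¹^2 * iQ f ρ) ρ := by
  have h := hasDerivAt_iB hf ρ
  have e : (∫ θ in (0:ℝ)..(2*π), 2 * pd1 f (ρ,θ) * pd1 (pd1 f) (ρ,θ))
      = -2*ρ⁻¹ * iB f ρ - 2*ρ⁻¹^2 * iQ f ρ := by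
    have e1 : (∫ θ in (0:ℝ)..(2*π), 2 * pd1 f (ρ,θ) * pd1 (pd1 f) (ρ,θ))
        = ∫ θ in (0:ℝ)..(2*π),
            ((-2*ρ⁻¹) * (pd1 f (ρ,θ))^2 + (-2*ρ⁻¹^2) * (pd1 f (ρ,θ) * pd2 (pd2 f) (ρ,θ))) := by
      apply intervalIntegral.integral_congr
      intro θ _
      show 2 * pd1 f (ρ,θ) * pd1 (pd1 f) (ρ,θ)
        = (-2*ρ⁻¹) * (pd1 f (ρ,θ))^2 + (-2*ρ⁻¹^2) * (pd1 f (ρ,θ) * pd2 (pd2 f) (ρ,θ))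
      rw [harm θ]; ring
    rw [e1, intervalIntegral.integral_add
        ((intLeft ((contDiff_pd1 hf).continuous.fun_pow 2) ρ _ _).const_mul _)
        ((intLeft ((contDiff_pd1 hf).continuous.fun_mul
          (contDiff_pd2 (contDiff_pd2 hf)).continuous) ρ _ _).const_mul _),
      intervalIntegral.integral_const_mul, intervalIntegral.integral_const_mul]
    show (-2*ρ⁻¹) * iB f ρ + (-2*ρ⁻¹^2) * iQ f ρ = _
    ring
  rwa [e] at h

lemma hasDerivAt_iD' (hperf : ∀ r θ : ℝ, f (r, θ + 2*π) = f (r, θ)) :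
    HasDerivAt (iD f) (iB f ρ - ρ⁻¹ * iD f ρ + ρ⁻¹^2 * iA f ρ) ρ := by
  have h := hasDerivAt_iD hf ρ
  have hfA : (∫ θ in (0:ℝ)..(2*π), f (ρ,θ) * pd2 (pd2 f) (ρ,θ)) = - iA f ρ := by
    have hadd := ibp2 hf hperf ρ
    rw [intervalIntegral.integral_add
      (intLeft ((contDiff_pd2 hf).continuous.fun_mul (contDiff_pd2 hf).continuous) ρ _ _)
      (intLeft (hf.continuous.fun_mul (contDiff_pd2 (contDiff_pd2 hf)).continuous) ρ _ _)] at hadd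
    have : (∫ θ in (0:ℝ)..(2*π), pd2 f (ρ,θ) * pd2 f (ρ,θ)) = iA f ρ := by
      apply intervalIntegral.integral_congr
      intro θ _
      show pd2 f (ρ,θ) * pd2 f (ρ,θ) = (pd2 f (ρ,θ))^2
      ring
    rw [this] at hadd
    linarith
  have e : (∫ θ in (0:ℝ)..(2*π),
        (pd1 f (ρ,θ) * pd1 f (ρ,θ) + f (ρ,θ) * pd1 (pd1 f) (ρ,θ)))
      = iB f ρ - ρ⁻¹ * iD f ρ + ρ⁻¹^2 * iA f ρ := by
    have e1 : (∫ θ in (0:ℝ)..(2*π),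
          (pd1 f (ρ,θ) * pd1 f (ρ,θ) + f (ρ,θ) * pd1 (pd1 f) (ρ,θ)))
        = ∫ θ in (0:ℝ)..(2*π),
            ((pd1 f (ρ,θ))^2 + ((-ρ⁻¹) * (f (ρ,θ) * pd1 f (ρ,θ))
              + (-ρ⁻¹^2) * (f (ρ,θ) * pd2 (pd2 f) (ρ,θ)))) := by
      apply intervalIntegral.integral_congr
      intro θ _
      show pd1 f (ρ,θ) * pd1 f (ρ,θ) + f (ρ,θ) * pd1 (pd1 f) (ρ,θ)
        = (pd1 f (ρ,θ))^2 + ((-ρ⁻¹) * (f (ρ,θ) * pd1 f (ρ,θ))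
            + (-ρ⁻¹^2) * (f (ρ,θ) * pd2 (pd2 f) (ρ,θ)))
      rw [harm θ]; ring
    rw [e1, intervalIntegral.integral_add
        (intLeft ((contDiff_pd1 hf).continuous.fun_pow 2) ρ _ _)
        (((intLeft (hf.continuous.fun_mul (contDiff_pd1 hf).continuous) ρ _ _).const_mul _).add
          ((intLeft (hf.continuous.fun_mul
            (contDiff_pd2 (contDiff_pd2 hf)).continuous) ρ _ _).const_mul _)),
      intervalIntegral.integral_add
        ((intLeft (hf.continuous.fun_mul (contDiff_pd1 hf).continuous) ρ _ _).const_mul _)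
        ((intLeft (hf.continuous.fun_mul
            (contDiff_pd2 (contDiff_pd2 hf)).continuous) ρ _ _).const_mul _),
      intervalIntegral.integral_const_mul, intervalIntegral.integral_const_mul, hfA]
    show iB f ρ + ((-ρ⁻¹) * iD f ρ + (-ρ⁻¹^2) * (- iA f ρ)) = _
    ring
  rwa [e] at h

end Harm

lemma mono_of_hasDerivAt_nonneg {ε : ℝ} {g g' : ℝ → ℝ}
    (hd : ∀ x, ε ≤ x → HasDerivAt g (g' x) x) (h0 : ∀ x, ε ≤ x → 0 ≤ g' x)
    {a b : ℝ} (ha : ε ≤ a) (hab : a ≤ b) : g a ≤ g b := by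
  rcases eq_or_lt_of_le hab with rfl | h
  · exact le_refl _
  · have hcont : ContinuousOn g (Set.Icc a b) := fun x hx =>
      ((hd x (le_trans ha hx.1)).continuousAt).continuousWithinAt
    obtain ⟨c, hc, hc2⟩ := exists_hasDerivAt_eq_slope g g' h hcont
      (fun x hx => hd x (le_trans ha (le_of_lt hx.1)))
    have h0c := h0 c (le_trans ha hc.1.le)
    rw [hc2] at h0c
    have hba : (0:ℝ) < b - a := sub_pos.2 h
    have := mul_nonneg h0c hba.le
    rw [div_mul_cancel₀ _ hba.ne'] at this
    linarith

/-- Let `w` be harmonic (written in polar coordinates `W(r,θ)`, `2π`-periodic in `θ`) on the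
region `r ≥ ε`, smooth up to the boundary. Then
`I(ρ) = ρ ∫_{|x|=ρ} (|∂_T w|² − |∂_r w|²) ds` is independent of `ρ ≥ ε`; and if moreover
`|w| ≤ C / r` for large `r`, then `I(ρ) = 0` for all `ρ ≥ ε`. -/
theorem stmt_16 (ε : ℝ) (hε : 0 < ε) (W : ℝ → ℝ → ℝ)
    (hsmooth : ContDiff ℝ (⊤ : ℕ∞) (fun p : ℝ × ℝ => W p.1 p.2))
    (hper : ∀ r θ : ℝ, W r (θ + 2 * π) = W r θ)
    (hharm : ∀ r : ℝ, ε ≤ r → ∀ θ : ℝ,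
      deriv (fun s => deriv (fun s' => W s' θ) s) r +
        r⁻¹ * deriv (fun s => W s θ) r +
        r⁻¹ ^ 2 * deriv (fun s => deriv (fun s' => W r s') s) θ = 0)
    (I : ℝ → ℝ)
    (hI : ∀ ρ : ℝ, I ρ =
      ρ * ∫ θ in (0:ℝ)..(2 * π),
        ((ρ⁻¹ * deriv (fun s => W ρ s) θ) ^ 2 - (deriv (fun s => W s θ) ρ) ^ 2) * ρ) :
    (∀ ρ₁ ρ₂ : ℝ, ε ≤ ρ₁ → ε ≤ ρ₂ → I ρ₁ = I ρ₂) ∧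
    ((∃ C R₁ : ℝ, ∀ r : ℝ, R₁ ≤ r → ∀ θ : ℝ, |W r θ| ≤ C / r) →
      ∀ ρ : ℝ, ε ≤ ρ → I ρ = 0) := by
  set f : ℝ × ℝ → ℝ := fun p => W p.1 p.2 with hf_def
  have hf : ContDiff ℝ (⊤ : ℕ∞) f := hsmooth
  have hperf : ∀ r θ : ℝ, f (r, θ + 2*π) = f (r, θ) := hper
  have dW1 : ∀ r θ : ℝ, deriv (fun s => W s θ) r = pd1 f (r,θ) :=
    fun r θ => (hasDerivAt_pd1 hf r θ).deriv
  have dW2 : ∀ r θ : ℝ, deriv (fun s => W r s) θ = pd2 f (r,θ) :=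
    fun r θ => (hasDerivAt_pd2 hf r θ).deriv
  -- harmonicity in pd form
  have harm : ∀ ρ : ℝ, ε ≤ ρ → ∀ θ : ℝ,
      pd1 (pd1 f) (ρ,θ) = -(ρ⁻¹ * pd1 f (ρ,θ)) - ρ⁻¹^2 * pd2 (pd2 f) (ρ,θ) := by
    intro ρ hρ θ
    have h := hharm ρ hρ θ
    have e1 : deriv (fun s => deriv (fun s' => W s' θ) s) ρ = pd1 (pd1 f) (ρ,θ) := by
      have : (fun s => deriv (fun s' => W s' θ) s) = fun s => pd1 f (s,θ) :=
        funext fun s => dW1 s θ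
      rw [this]
      exact (hasDerivAt_pd1 (contDiff_pd1 hf) ρ θ).deriv
    have e2 : deriv (fun s => deriv (fun s' => W ρ s') s) θ = pd2 (pd2 f) (ρ,θ) := by
      have : (fun s => deriv (fun s' => W ρ s') s) = fun s => pd2 f (ρ,s) :=
        funext fun s => dW2 ρ s
      rw [this]
      exact (hasDerivAt_pd2 (contDiff_pd2 hf) ρ θ).deriv
    rw [e1, e2, dW1] at h
    linarith
  -- rewrite I in terms of iA, iB
  have hIeq : ∀ ρ : ℝ, ε ≤ ρ → I ρ = iA f ρ - ρ^2 * iB f ρ := by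
    intro ρ hρ
    have hρ0 : ρ ≠ 0 := (lt_of_lt_of_le hε hρ).ne'
    rw [hI ρ]
    have e1 : (∫ θ in (0:ℝ)..(2 * π),
        ((ρ⁻¹ * deriv (fun s => W ρ s) θ) ^ 2 - (deriv (fun s => W s θ) ρ) ^ 2) * ρ)
        = (∫ θ in (0:ℝ)..(2 * π),
            (ρ⁻¹^2 * (pd2 f (ρ,θ))^2 + (-1) * (pd1 f (ρ,θ))^2)) * ρ := by
      rw [← intervalIntegral.integral_mul_const]
      apply intervalIntegral.integral_congr
      intro θ _
      show ((ρ⁻¹ * deriv (fun s => W ρ s) θ) ^ 2 - (deriv (fun s => W s θ) ρ) ^ 2) * ρ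
        = (ρ⁻¹^2 * (pd2 f (ρ,θ))^2 + (-1) * (pd1 f (ρ,θ))^2) * ρ
      rw [dW1, dW2]; ring
    rw [e1, intervalIntegral.integral_add
        ((intLeft ((contDiff_pd2 hf).continuous.fun_pow 2) ρ _ _).const_mul _)
        ((intLeft ((contDiff_pd1 hf).continuous.fun_pow 2) ρ _ _).const_mul _),
      intervalIntegral.integral_const_mul, intervalIntegral.integral_const_mul]
    show ρ * ((ρ⁻¹^2 * iA f ρ + (-1) * iB f ρ) * ρ) = _
    field_simp
    ring
  -- E = iA - ρ² iB has zero derivative on [ε, ∞)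
  have hE : ∀ ρ : ℝ, ε ≤ ρ → HasDerivAt (fun x => iA f x - x^2 * iB f x) 0 ρ := by
    intro ρ hρ
    have hρ0 : ρ ≠ 0 := (lt_of_lt_of_le hε hρ).ne'
    have hA' := hasDerivAt_iA' hf hperf ρ
    have hB' := hasDerivAt_iB' hf (harm ρ hρ)
    have h := hA'.fun_sub (((hasDerivAt_pow 2 ρ).fun_mul hB'))
    refine h.congr_deriv ?_
    norm_num
    field_simp
    ring
  have Econst : ∀ ρ : ℝ, ε ≤ ρ → iA f ρ - ρ^2 * iB f ρ = iA f ε - ε^2 * iB f ε := by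
    intro ρ hρ
    have h1 := mono_of_hasDerivAt_nonneg (g' := fun _ => (0:ℝ))
      (fun x hx => hE x hx) (fun x _ => le_refl 0) (le_refl ε) hρ
    have h2 := mono_of_hasDerivAt_nonneg (g := fun x => -(iA f x - x^2 * iB f x))
      (g' := fun _ => (0:ℝ))
      (fun x hx => by simpa using (hE x hx).fun_neg) (fun x _ => le_refl 0) (le_refl ε) hρ
    simp only [neg_le_neg_iff] at h2
    linarith
  constructor
  · intro ρ₁ ρ₂ h1 h2
    rw [hIeq ρ₁ h1, hIeq ρ₂ h2, Econst ρ₁ h1, Econst ρ₂ h2]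
  · rintro ⟨C, R₁, hdecay⟩ ρ hρ
    rw [hIeq ρ hρ, Econst ρ hρ]
    set c := iA f ε - ε^2 * iB f ε with hc_def
    by_contra hc0
    have hcpos : 0 < |c| := abs_pos.2 hc0
    set Kε := ε * iD f ε with hKε_def
    -- step 1 : K(x) = x D(x) satisfies K(x) ≥ Kε + |c| (log x - log ε)
    have φmono : ∀ x, ε ≤ x →
        Kε - |c| * Real.log ε ≤ x * iD f x - |c| * Real.log x := by
      intro x hx
      apply mono_of_hasDerivAt_nonneg
        (g := fun y => y * iD f y - |c| * Real.log y)
        (g' := fun y => y * iB f y + y⁻¹ * iA f y - |c| * y⁻¹) _ _ (le_refl ε) hx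
      · intro y hy
        have hy0 : (0:ℝ) < y := lt_of_lt_of_le hε hy
        have h := ((hasDerivAt_id y).fun_mul (hasDerivAt_iD' hf (harm y hy) hperf)).fun_sub
          ((Real.hasDerivAt_log hy0.ne').const_mul |c|)
        refine h.congr_deriv ?_
        norm_num
        field_simp
        ring
      · intro y hy
        have hy0 : (0:ℝ) < y := lt_of_lt_of_le hε hy
        have hAc : iA f y - y^2 * iB f y = c := Econst y hy
        have h2A : |c| ≤ 2 * iA f y - c := by
          have hB : 0 ≤ y^2 * iB f y := mul_nonneg (sq_nonneg y) (iB_nonneg f y)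
          rcases abs_cases c with ⟨h, _⟩ | ⟨h, _⟩ <;> nlinarith [iA_nonneg f y]
        show 0 ≤ y * iB f y + y⁻¹ * iA f y - |c| * y⁻¹
        rw [show y * iB f y + y⁻¹ * iA f y - |c| * y⁻¹
            = (y^2 * iB f y + iA f y - |c|) / y by field_simp]
        apply div_nonneg _ hy0.le
        nlinarith
    -- step 2 : H(x) ≥ Hε + 2 Kε (log x - log ε) + |c| (log x - log ε)²
    have ψmono : ∀ x, ε ≤ x →
        iH f ε + 2 * Kε * (Real.log x - Real.log ε)
          + |c| * (Real.log x - Real.log ε)^2 ≤ iH f x := by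
      intro x hx
      have key := mono_of_hasDerivAt_nonneg
        (g := fun y => iH f y - 2 * Kε * Real.log y - |c| * (Real.log y - Real.log ε)^2)
        (g' := fun y => 2 * iD f y - 2 * Kε * y⁻¹ - |c| * (2 * (Real.log y - Real.log ε) * y⁻¹))
        ?_ ?_ (le_refl ε) hx
      · simp only [sub_self] at key
        have hε2 : ((Real.log ε - Real.log ε) : ℝ) = 0 := sub_self _
        nlinarith [key]
      · intro y hy
        have hy0 : (0:ℝ) < y := lt_of_lt_of_le hε hy
        have h1 := (hasDerivAt_iH hf y).fun_sub ((Real.hasDerivAt_log hy0.ne').const_mul (2 * Kε))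
        have h2 := (((Real.hasDerivAt_log hy0.ne').sub_const (Real.log ε)).fun_pow 2).const_mul |c|
        have h := h1.fun_sub h2
        refine h.congr_deriv ?_
        norm_num
      · intro y hy
        have hy0 : (0:ℝ) < y := lt_of_lt_of_le hε hy
        have hφ := φmono y hy
        show 0 ≤ 2 * iD f y - 2 * Kε * y⁻¹ - |c| * (2 * (Real.log y - Real.log ε) * y⁻¹)
        rw [show 2 * iD f y - 2 * Kε * y⁻¹ - |c| * (2 * (Real.log y - Real.log ε) * y⁻¹)
            = 2 * ((y * iD f y - Kε - |c| * (Real.log y - Real.log ε))) / y by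
          field_simp]
        apply div_nonneg _ hy0.le
        nlinarith
    -- decay bound on H
    have hC : 0 ≤ C := by
      by_contra hCneg
      push_neg at hCneg
      have hr0 : (0:ℝ) < max R₁ 1 := lt_of_lt_of_le one_pos (le_max_right _ _)
      have := hdecay (max R₁ 1) (le_max_left _ _) 0
      have hneg : C / max R₁ 1 < 0 := div_neg_of_neg_of_pos hCneg hr0
      linarith [abs_nonneg (W (max R₁ 1) 0)]
    have Hbd : ∀ x, max ε R₁ ≤ x → iH f x ≤ 2 * π * (C/ε)^2 := by
      intro x hx
      have hxε : ε ≤ x := le_trans (le_max_left _ _) hx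
      have hx0 : (0:ℝ) < x := lt_of_lt_of_le hε hxε
      have hbd : ∀ θ ∈ Set.Icc (0:ℝ) (2*π), (f (x,θ))^2 ≤ (C/ε)^2 := by
        intro θ _
        have h1 : |W x θ| ≤ C / x := hdecay x (le_trans (le_max_right _ _) hx) θ
        have h2 : C / x ≤ C / ε := div_le_div_of_nonneg_left hC hε hxε
        calc (f (x,θ))^2 = |W x θ|^2 := by rw [sq_abs]
          _ ≤ (C/ε)^2 := by
            apply pow_le_pow_left₀ (abs_nonneg _)
            linarith
      calc iH f x ≤ ∫ _θ in (0:ℝ)..(2*π), (C/ε)^2 := by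
            apply intervalIntegral.integral_mono_on (by positivity)
              (intLeft (hf.continuous.pow 2) x _ _) intervalIntegrable_const hbd
        _ = 2 * π * (C/ε)^2 := by simp [mul_comm]
    -- choose a large radius and derive a contradiction
    set B2 := 2 * π * (C/ε)^2 with hB2_def
    have hB2 : 0 ≤ B2 := by positivity
    set S := 2*|Kε| + |iH f ε| + B2 + 1 with hS_def
    have hS0 : 0 ≤ S := by positivity
    set L := max (max 1 (Real.log (max R₁ ε) - Real.log ε + 1)) (S/|c|) with hL_def
    have hL1 : (1:ℝ) ≤ L := le_trans (le_max_left _ _) (le_max_left _ _)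
    have hL0 : (0:ℝ) ≤ L := by linarith
    have hLS : S ≤ |c| * L := by
      have := le_max_right (max 1 (Real.log (max R₁ ε) - Real.log ε + 1)) (S/|c|)
      rw [div_le_iff₀ hcpos] at this
      calc S ≤ L * |c| := this
        _ = |c| * L := mul_comm _ _
    set ρ' := ε * Real.exp L with hρ'_def
    have hρ'ε : ε ≤ ρ' := by
      have : (1:ℝ) ≤ Real.exp L := Real.one_le_exp (by linarith)
      calc ε = ε * 1 := (mul_one ε).symm
        _ ≤ ε * Real.exp L := by nlinarith
    have hρ'R : R₁ ≤ ρ' := by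
      have hmax : (0:ℝ) < max R₁ ε := lt_of_lt_of_le hε (le_max_right _ _)
      have hLlog : Real.log (max R₁ ε) - Real.log ε ≤ L :=
        le_trans (by linarith [le_trans (le_max_right 1 (Real.log (max R₁ ε) - Real.log ε + 1)) (le_max_left (max 1 (Real.log (max R₁ ε) - Real.log ε + 1)) (S/|c|))]) (le_refl L)
      have := Real.exp_le_exp.2 hLlog
      rw [Real.exp_sub, Real.exp_log hmax, Real.exp_log hε] at this
      have h2 : max R₁ ε / ε * ε ≤ Real.exp L * ε := by nlinarith
      rw [div_mul_cancel₀ _ hε.ne'] at h2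
      calc R₁ ≤ max R₁ ε := le_max_left _ _
        _ ≤ Real.exp L * ε := h2
        _ = ρ' := mul_comm _ _
    have hlog : Real.log ρ' - Real.log ε = L := by
      rw [hρ'_def, Real.log_mul hε.ne' (Real.exp_pos L).ne', Real.log_exp]
      ring
    have m1 := ψmono ρ' hρ'ε
    rw [hlog] at m1
    have m2 := Hbd ρ' (max_le hρ'ε hρ'R)
    have habsK : -|Kε| ≤ Kε := neg_abs_le Kε
    have habsH : -|iH f ε| ≤ iH f ε := neg_abs_le (iH f ε)
    have e2 : |c| * L^2 = |c| * L * L := by ring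
    have hk1 : S * L ≤ |c| * L * L := mul_le_mul_of_nonneg_right hLS hL0
    have hk2 : -|Kε| * L ≤ Kε * L := mul_le_mul_of_nonneg_right habsK hL0
    have hk3 : |iH f ε| * 1 ≤ |iH f ε| * L := mul_le_mul_of_nonneg_left hL1 (abs_nonneg _)
    have hk4 : B2 * 1 ≤ B2 * L := mul_le_mul_of_nonneg_left hL1 hB2
    have hk5 : S * L = 2 * (|Kε| * L) + |iH f ε| * L + B2 * L + L := by
      simp only [hS_def]; ring
    linarith [m1, m2, habsH, hk1, hk2, hk3, hk4, hk5, hL1, e2]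
end
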